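/- Let F be a norm on ℝ^N (N ≥ 2) with dual norm F°, let R > 0, and define v(x) := (N − 1) log(F°(x)/R) and z(x) := x / F°(x) for x ≠ 0. Then at every point x ∈ ℝ^N \ {0} where F° is (Fréchet) differentiable: (i) v is differentiable at x with ∇v(x) = (N − 1) ∇F°(x) / F°(x); (ii) F(∇v(x)) = (N − 1)/F°(x); (iii) z(x) · ∇v(x) = F(∇v(x)) and F°(z(x)) = 1, so that z(x) is a subgradient of F at ∇v(x); and (iv) the divergence of z at x (the trace of the Fréchet derivative of z at x) equals F(∇v(x)). Moreover v(x) = 0 whenever F°(x) = R. -/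

import Mathlib

/-!
Wherever the norm `F°` is differentiable, convexity and homogeneity give Euler's identity
`∇F°(x) · x = F°(x)` and the bound `∇F°(x) · w ≤ F°(w)`. By Hahn–Banach every `w` has a
`y` with `F°(y) ≤ 1` and `y · w = F(w)`, so the bound yields `F(∇F°(x)) ≤ 1`, while Euler's
identity and `x · ξ ≤ F°(x) F(ξ)` yield `F(∇F°(x)) ≥ 1`. The rest is calculus:
`∇v = (N - 1) ∇F° / F°`, and `div (x / F°(x)) = N / F° - (∇F° · x) / F°² = (N - 1) / F°`.
-/

open scoped RealInnerProductSpace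

/-- The dual (polar) norm `F°(ξ) = sup { ξ · y : F(y) ≤ 1 }` of `F`. -/
noncomputable def polar {N : ℕ} (F : EuclideanSpace ℝ (Fin N) → ℝ)
    (ξ : EuclideanSpace ℝ (Fin N)) : ℝ :=
  sSup ((fun y => (inner ℝ ξ y : ℝ)) '' {y | F y ≤ 1})

open Set
open scoped Gradient

section Convex

variable {E : Type*} [NormedAddCommGroup E] [NormedSpace ℝ E]

theorem ConvexOn.le_apply_add_of_hasFDerivAt {f : E → ℝ} {f' : E →L[ℝ] ℝ} {x : E}
    (hf : ConvexOn ℝ univ f) (hx : HasFDerivAt f f' x) (w : E) : f x + f' w ≤ f (x + w) := by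
  have hline : ConvexOn ℝ univ fun t : ℝ => f (x + t • w) := by
    simpa [Function.comp_def] using
      (hf.translate_right x).comp_linearMap (LinearMap.toSpanSingleton ℝ E w)
  have hderiv : HasDerivAt (fun t : ℝ => f (x + t • w)) (f' w) 0 := by
    have hmove : HasDerivAt (fun t : ℝ => x + t • w) w 0 := by
      simpa using ((hasDerivAt_id (0 : ℝ)).smul_const w).const_add x
    exact (show HasFDerivAt f f' (x + (0 : ℝ) • w) by simpa using hx).comp_hasDerivAt 0 hmove
  have := hline.le_slope_of_hasDerivAt (mem_univ 0) (mem_univ 1) one_pos hderiv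
  simp only [slope, sub_zero, inv_one, one_smul, zero_smul, add_zero, vsub_eq_sub, smul_eq_mul,
    one_mul] at this
  linarith

end Convex

namespace Seminorm

variable {E : Type*} [NormedAddCommGroup E] [NormedSpace ℝ E]

theorem hasFDerivAt_apply_le {q : Seminorm ℝ E} {q' : E →L[ℝ] ℝ} {x : E}
    (hq : HasFDerivAt q q' x) (w : E) : q' w ≤ q w := by
  linarith [q.convexOn.le_apply_add_of_hasFDerivAt hq w, map_add_le_add q x w]

theorem hasFDerivAt_apply_self {q : Seminorm ℝ E} {q' : E →L[ℝ] ℝ} {x : E}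
    (hq : HasFDerivAt q q' x) : q' x = q x := by
  have := q.convexOn.le_apply_add_of_hasFDerivAt hq (-x)
  simp only [add_neg_cancel, map_zero, map_neg] at this
  linarith [hasFDerivAt_apply_le hq x]

theorem continuous_of_finiteDimensional [FiniteDimensional ℝ E] (q : Seminorm ℝ E) :
    Continuous q :=
  continuousOn_univ.mp (q.convexOn.continuousOn isOpen_univ)

theorem exists_pos_mul_norm_le [FiniteDimensional ℝ E] {q : Seminorm ℝ E}
    (hq : ∀ x, x ≠ 0 → 0 < q x) : ∃ ε > 0, ∀ x, ε * ‖x‖ ≤ q x := by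
  cases subsingleton_or_nontrivial E with
  | inl _ => exact ⟨1, one_pos, fun x => by simp [Subsingleton.elim x 0]⟩
  | inr _ =>
    obtain ⟨y, hy, hmin⟩ := (isCompact_sphere (0 : E) 1).exists_isMinOn
      (NormedSpace.sphere_nonempty.mpr zero_le_one) q.continuous_of_finiteDimensional.continuousOn
    rw [mem_sphere_zero_iff_norm] at hy
    refine ⟨q y, hq y (norm_ne_zero_iff.mp (by simp [hy])), fun x => ?_⟩
    rcases eq_or_ne x 0 with rfl | hx
    · simp
    have hx' : 0 < ‖x‖ := norm_pos_iff.mpr hx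
    have : q y ≤ q (‖x‖⁻¹ • x) := hmin (by simp [norm_smul, hx'.ne'])
    rwa [map_smul_eq_mul, norm_inv, norm_norm, ← div_eq_inv_mul, le_div_iff₀ hx'] at this

theorem exists_dual_apply_eq (q : Seminorm ℝ E) (w : E) :
    ∃ g : Module.Dual ℝ E, g w = q w ∧ ∀ x, g x ≤ q x := by
  rcases eq_or_ne w 0 with rfl | hw
  · exact ⟨0, by simp, fun x => by simp⟩
  let c := LinearEquiv.coord ℝ E w hw
  obtain ⟨g, hgc, hg⟩ := Module.Dual.exists_extension_of_le_seminorm_real (ℝ ∙ w)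
    (q w • c.toLinearMap) (p := q) fun y => by
      conv_rhs => rw [← LinearEquiv.coord_apply_smul ℝ E w hw y]
      rw [map_smul_eq_mul, LinearMap.smul_apply, smul_eq_mul, mul_comm]
      exact mul_le_mul_of_nonneg_right (le_abs_self _) (apply_nonneg _ _)
  refine ⟨g, ?_, fun x => (le_abs_self _).trans (hg x)⟩
  simpa [c, LinearEquiv.coord_self] using hgc ⟨w, Submodule.mem_span_singleton_self w⟩

end Seminorm

section Polar

variable {N : ℕ} {p : Seminorm ℝ (EuclideanSpace ℝ (Fin N))}

theorem polar_le {ξ : EuclideanSpace ℝ (Fin N)} {c : ℝ} (h : ∀ y, p y ≤ 1 → ⟪ξ, y⟫ ≤ c) :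
    polar p ξ ≤ c :=
  csSup_le ⟨_, mem_image_of_mem _ (show p 0 ≤ 1 by simp)⟩ (forall_mem_image.mpr h)

theorem exists_polar_le_one_inner_eq (w : EuclideanSpace ℝ (Fin N)) :
    ∃ y, polar p y ≤ 1 ∧ ⟪y, w⟫ = p w := by
  obtain ⟨g, hgw, hg⟩ := p.exists_dual_apply_eq w
  let y := (InnerProductSpace.toDual ℝ _).symm (LinearMap.toContinuousLinearMap g)
  have hy : ∀ u, ⟪y, u⟫ = g u := fun u => InnerProductSpace.toDual_symm_apply
  exact ⟨y, polar_le fun u hu => (hy u).trans_le ((hg u).trans hu), (hy w).trans hgw⟩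

variable (hp : ∀ x, x ≠ 0 → 0 < p x)
include hp

theorem inner_le_polar (ξ : EuclideanSpace ℝ (Fin N)) {y : EuclideanSpace ℝ (Fin N)}
    (hy : p y ≤ 1) : ⟪ξ, y⟫ ≤ polar p ξ := by
  obtain ⟨ε, hε, hpε⟩ := Seminorm.exists_pos_mul_norm_le hp
  refine le_csSup ⟨‖ξ‖ / ε, forall_mem_image.mpr fun u hu => ?_⟩ (mem_image_of_mem _ hy)
  calc ⟪ξ, u⟫ ≤ ‖ξ‖ * ‖u‖ := real_inner_le_norm ξ u
    _ ≤ ‖ξ‖ / ε := by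
      rw [le_div_iff₀ hε, mul_assoc]
      exact mul_le_of_le_one_right (norm_nonneg ξ) (by nlinarith [hpε u, mem_ofPred.mp hu])

theorem polar_nonneg (ξ : EuclideanSpace ℝ (Fin N)) : 0 ≤ polar p ξ := by
  simpa using inner_le_polar hp ξ (y := 0) (by simp)

theorem inner_le_polar_mul (ξ y : EuclideanSpace ℝ (Fin N)) : ⟪ξ, y⟫ ≤ polar p ξ * p y := by
  rcases eq_or_ne y 0 with rfl | hy
  · simp
  have hpy := hp y hy
  have := inner_le_polar hp ξ (y := (p y)⁻¹ • y) (by rw [map_smul_eq_mul, norm_inv,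
    Real.norm_of_nonneg hpy.le, inv_mul_cancel₀ hpy.ne'])
  rwa [real_inner_smul_right, inv_mul_le_iff₀ hpy, mul_comm] at this

theorem polar_pos {ξ : EuclideanSpace ℝ (Fin N)} (hξ : ξ ≠ 0) : 0 < polar p ξ := by
  have h := inner_le_polar_mul hp ξ ξ
  rw [real_inner_self_eq_norm_sq] at h
  exact pos_of_mul_pos_left ((by positivity : 0 < ‖ξ‖ ^ 2).trans_le h) (apply_nonneg p ξ)

noncomputable def polarSeminorm : Seminorm ℝ (EuclideanSpace ℝ (Fin N)) :=
  Seminorm.ofSMulLE (polar p)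
    (le_antisymm (polar_le fun y _ => by simp) (polar_nonneg hp 0))
    (fun ξ η => polar_le fun y hy => by
      rw [inner_add_left]; exact add_le_add (inner_le_polar hp ξ hy) (inner_le_polar hp η hy))
    (fun r ξ => polar_le fun y hy => calc
      ⟪r • ξ, y⟫ = ⟪ξ, r • y⟫ := by rw [real_inner_smul_left, real_inner_smul_right]
      _ ≤ polar p ξ * p (r • y) := inner_le_polar_mul hp ξ _
      _ = ‖r‖ * polar p ξ * p y := by rw [map_smul_eq_mul]; ring
      _ ≤ ‖r‖ * polar p ξ := mul_le_of_le_one_right (by positivity [polar_nonneg hp ξ]) hy)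

theorem add_inner_sub_le_of_polar_le_one {ζ ξ : EuclideanSpace ℝ (Fin N)} (hζ : polar p ζ ≤ 1)
    (hζξ : ⟪ζ, ξ⟫ = p ξ) (w : EuclideanSpace ℝ (Fin N)) : p ξ + ⟪ζ, w - ξ⟫ ≤ p w := by
  rw [inner_sub_right, hζξ, add_sub_cancel]
  exact (inner_le_polar_mul hp ζ w).trans (mul_le_of_le_one_left (apply_nonneg p w) hζ)

@[simp]
theorem coe_polarSeminorm : ⇑(polarSeminorm hp) = polar p := rfl

theorem fderiv_polar_apply_self {x : EuclideanSpace ℝ (Fin N)}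
    (hd : DifferentiableAt ℝ (polar p) x) : fderiv ℝ (polar p) x x = polar p x :=
  Seminorm.hasFDerivAt_apply_self (q := polarSeminorm hp) hd.hasFDerivAt

theorem apply_gradient_polar {x : EuclideanSpace ℝ (Fin N)} (hx : x ≠ 0)
    (hd : DifferentiableAt ℝ (polar p) x) : p (∇ (polar p) x) = 1 := by
  apply le_antisymm
  · obtain ⟨y, hy, hyg⟩ := exists_polar_le_one_inner_eq (p := p) (∇ (polar p) x)
    calc p (∇ (polar p) x) = fderiv ℝ (polar p) x y := by
          rw [← hyg, real_inner_comm, inner_gradient_left]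
      _ ≤ polar p y := Seminorm.hasFDerivAt_apply_le (q := polarSeminorm hp) hd.hasFDerivAt y
      _ ≤ 1 := hy
  · have h := inner_le_polar_mul hp x (∇ (polar p) x)
    rw [real_inner_comm, inner_gradient_left, fderiv_polar_apply_self hp hd] at h
    exact (le_mul_iff_one_le_right (polar_pos hp hx)).mp h

end Polar

section Calculus

variable {E : Type*} [NormedAddCommGroup E] [InnerProductSpace ℝ E]

theorem HasGradientAt.const_mul_log_div [CompleteSpace E] {G : E → ℝ} {g x : E}
    (hG : HasGradientAt G g x) (hx : G x ≠ 0) {R : ℝ} (hR : R ≠ 0) (a : ℝ) :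
    HasGradientAt (fun y => a * Real.log (G y / R)) ((a / G x) • g) x := by
  rw [hasGradientAt_iff_hasFDerivAt] at hG ⊢
  have h := ((hG.mul_const R⁻¹).log (mul_ne_zero hx (inv_ne_zero hR))).const_mul a
  simp only [div_eq_mul_inv]
  refine h.congr_fderiv (ContinuousLinearMap.ext fun y => ?_)
  simp only [smul_apply, map_smul, smul_eq_mul]
  field_simp

theorem HasFDerivAt.trace_fderiv_smul_self [FiniteDimensional ℝ E] {f : E → ℝ}
    {f' : E →L[ℝ] ℝ} {x : E} (hf : HasFDerivAt f f' x) :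
    LinearMap.trace ℝ E (fderiv ℝ (fun y => f y • y) x) = Module.finrank ℝ E * f x + f' x := by
  have h : HasFDerivAt (fun y => f y • y) (f x • ContinuousLinearMap.id ℝ E + f'.smulRight x) x :=
    hf.smul (hasFDerivAt_id x)
  rw [h.fderiv]
  simp only [ContinuousLinearMap.toLinearMap_add, ContinuousLinearMap.toLinearMap_smul,
    ContinuousLinearMap.coe_id, ContinuousLinearMap.coe_smulRight, map_add, map_smul,
    LinearMap.trace_id, LinearMap.trace_smulRight, ContinuousLinearMap.coe_coe, smul_eq_mul]
  ring

end Calculus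

theorem wulff_shape_explicit_solution_general {N : ℕ}
    (F : EuclideanSpace ℝ (Fin N) → ℝ)
    (hF_add : ∀ x y, F (x + y) ≤ F x + F y)
    (hF_smul : ∀ (a : ℝ) x, F (a • x) = |a| * F x)
    (hF_pos : ∀ x, x ≠ 0 → 0 < F x)
    (R : ℝ) (hR : 0 < R)
    (v : EuclideanSpace ℝ (Fin N) → ℝ)
    (hv : ∀ x, v x = ((N : ℝ) - 1) * Real.log (polar F x / R))
    (z : EuclideanSpace ℝ (Fin N) → EuclideanSpace ℝ (Fin N))
    (hz : ∀ x, z x = (polar F x)⁻¹ • x) :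
    (∀ x : EuclideanSpace ℝ (Fin N), x ≠ 0 → DifferentiableAt ℝ (polar F) x →
      -- (i) differentiability of v and formula for its gradient
      (DifferentiableAt ℝ v x ∧
        gradient v x = (((N : ℝ) - 1) / polar F x) • gradient (polar F) x) ∧
      -- (ii) F(∇v(x)) = (N−1)/F°(x)
      F (gradient v x) = ((N : ℝ) - 1) / polar F x ∧
      -- (iii) z(x) · ∇v(x) = F(∇v(x)), F°(z(x)) = 1, and z(x) ∈ ∂F(∇v(x))
      (⟪z x, gradient v x⟫ = F (gradient v x) ∧
        polar F (z x) = 1 ∧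
        ∀ w : EuclideanSpace ℝ (Fin N),
          F (gradient v x) + ⟪z x, w - gradient v x⟫ ≤ F w) ∧
      -- (iv) div z(x) = F(∇v(x))
      (DifferentiableAt ℝ z x ∧
        LinearMap.trace ℝ (EuclideanSpace ℝ (Fin N)) (fderiv ℝ z x).toLinearMap
          = F (gradient v x))) ∧
    -- boundary condition: v = 0 on the boundary of the Wulff shape W_R
    (∀ x : EuclideanSpace ℝ (Fin N), polar F x = R → v x = 0) := by
  obtain ⟨p, rfl⟩ : ∃ p : Seminorm ℝ (EuclideanSpace ℝ (Fin N)), ⇑p = F :=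
    ⟨Seminorm.of F hF_add hF_smul, rfl⟩
  obtain rfl : v = fun x => ((N : ℝ) - 1) * Real.log (polar p x / R) := funext hv
  obtain rfl : z = fun x => (polar p x)⁻¹ • x := funext hz
  refine ⟨fun x hx hd => ?_, fun x hx => by simp [hx, hR.ne']⟩
  have hpx : 0 < polar p x := polar_pos hF_pos hx
  have hEuler : fderiv ℝ (polar p) x x = polar p x := fderiv_polar_apply_self hF_pos hd
  have hN : (1 : ℝ) ≤ N := by
    have := nontrivial_of_ne x 0 hx
    exact_mod_cast finrank_euclideanSpace_fin (𝕜 := ℝ) (n := N) ▸ Module.finrank_pos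
  set c := ((N : ℝ) - 1) / polar p x
  have hc : 0 ≤ c := div_nonneg (by linarith) hpx.le
  have hv' := hd.hasGradientAt.const_mul_log_div hpx.ne' hR.ne' ((N : ℝ) - 1)
  have hFv : p (c • ∇ (polar p) x) = c := by
    rw [map_smul_eq_mul, apply_gradient_polar hF_pos hx hd, Real.norm_of_nonneg hc, mul_one]
  have hzv : ⟪(polar p x)⁻¹ • x, c • ∇ (polar p) x⟫ = p (c • ∇ (polar p) x) := by
    rw [hFv, real_inner_smul_left, real_inner_smul_right, real_inner_comm, inner_gradient_left,
      hEuler]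
    field_simp
  have hpz : polar p ((polar p x)⁻¹ • x) = 1 := by
    rw [← coe_polarSeminorm hF_pos, map_smul_eq_mul, coe_polarSeminorm, norm_inv,
      Real.norm_of_nonneg hpx.le, inv_mul_cancel₀ hpx.ne']
  have hz' : HasFDerivAt (fun y => (polar p y)⁻¹) (-(polar p x ^ 2)⁻¹ • fderiv ℝ (polar p) x) x :=
    (hasDerivAt_inv hpx.ne').comp_hasFDerivAt x hd.hasFDerivAt
  rw [hv'.gradient]
  refine ⟨⟨hv'.differentiableAt, rfl⟩, hFv,
    ⟨hzv, hpz, add_inner_sub_le_of_polar_le_one hF_pos hpz.le hzv⟩,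
    (hz'.smul (hasFDerivAt_id x)).differentiableAt, ?_⟩
  rw [hz'.trace_fderiv_smul_self, finrank_euclideanSpace_fin, hFv]
  simp only [neg_smul, neg_apply, smul_apply, hEuler, smul_eq_mul, c]
  field_simp
  ring

/-- Example 9.1 of the paper: `v(x) = (N−1) log(F°(x)/R)` with vector field
`z(x) = x/F°(x)` solves the anisotropic IMCF equation `div z = F(∇v)` outside
the Wulff shape `W_R`, pointwise at every point of differentiability of `F°`. -/
theorem wulff_shape_explicit_solution {N : ℕ} (hN : 2 ≤ N)
    (F : EuclideanSpace ℝ (Fin N) → ℝ)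
    (hF_add : ∀ x y, F (x + y) ≤ F x + F y)
    (hF_smul : ∀ (a : ℝ) x, F (a • x) = |a| * F x)
    (hF_pos : ∀ x, x ≠ 0 → 0 < F x)
    (R : ℝ) (hR : 0 < R)
    (v : EuclideanSpace ℝ (Fin N) → ℝ)
    (hv : ∀ x, v x = ((N : ℝ) - 1) * Real.log (polar F x / R))
    (z : EuclideanSpace ℝ (Fin N) → EuclideanSpace ℝ (Fin N))
    (hz : ∀ x, z x = (polar F x)⁻¹ • x) :
    (∀ x : EuclideanSpace ℝ (Fin N), x ≠ 0 → DifferentiableAt ℝ (polar F) x →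
      -- (i) differentiability of v and formula for its gradient
      (DifferentiableAt ℝ v x ∧
        gradient v x = (((N : ℝ) - 1) / polar F x) • gradient (polar F) x) ∧
      -- (ii) F(∇v(x)) = (N−1)/F°(x)
      F (gradient v x) = ((N : ℝ) - 1) / polar F x ∧
      -- (iii) z(x) · ∇v(x) = F(∇v(x)), F°(z(x)) = 1, and z(x) ∈ ∂F(∇v(x))
      (⟪z x, gradient v x⟫ = F (gradient v x) ∧
        polar F (z x) = 1 ∧
        ∀ w : EuclideanSpace ℝ (Fin N),
          F (gradient v x) + ⟪z x, w - gradient v x⟫ ≤ F w) ∧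
      -- (iv) div z(x) = F(∇v(x))
      (DifferentiableAt ℝ z x ∧
        LinearMap.trace ℝ (EuclideanSpace ℝ (Fin N)) (fderiv ℝ z x).toLinearMap
          = F (gradient v x))) ∧
    -- boundary condition: v = 0 on the boundary of the Wulff shape W_R
    (∀ x : EuclideanSpace ℝ (Fin N), polar F x = R → v x = 0) :=
  wulff_shape_explicit_solution_general F hF_add hF_smul hF_pos R hR v hv z hz
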